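/- Let (T0, T̃0) be a joint pair of abstract Friedrichs operators on a complex Hilbert space H with constant μ > 0 from (T3), and let V ⊆ W be a subspace that is closed with respect to the graph norm, contains W0, and satisfies V ⊆ W⁺ and V^[⊥] ⊆ W⁻. Then T1 restricted to V is a bijection from V onto H, T̃1 restricted to V^[⊥] is a bijection from V^[⊥] onto H, and for every u ∈ V one has the a priori estimate ‖u‖ + ‖T1 u‖ ≤ (1 + 1/μ)‖T1 u‖; the same estimate holds with T̃1 and V^[⊥] in place of T1 and V. -/

import Mathlib

open scoped InnerProductSpace
open Filter Topology LinearPMap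

noncomputable section

variable {H : Type*} [NormedAddCommGroup H] [InnerProductSpace ℂ H] [CompleteSpace H]

/-- The inner product used in the paper (antilinear in the **second** entry):
`pInner x y = ⟪y, x⟫` in Mathlib's convention. -/
def pInner {H : Type*} [NormedAddCommGroup H] [InnerProductSpace ℂ H] (x y : H) : ℂ :=
  ⟪y, x⟫_ℂ

/-- A pair of densely defined operators with common domain satisfying conditions (T1) and (T2). -/
structure IsDualPairT12 (T0 T0t : H →ₗ.[ℂ] H) (lam : ℝ) : Prop where
  dom_eq : T0.domain = T0t.domain
  dense' : Dense (T0.domain : Set H)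
  sym : ∀ (φ : T0.domain) (ψ : T0t.domain), pInner (T0 φ) (ψ : H) = pInner (φ : H) (T0t ψ)
  lam_pos : 0 < lam
  bound : ∀ (x : H) (hx : x ∈ T0.domain),
    ‖T0 ⟨x, hx⟩ + T0t ⟨x, dom_eq.le hx⟩‖ ≤ 2 * lam * ‖x‖

/-- A joint pair of abstract Friedrichs operators: (T1), (T2) and (T3). -/
structure IsFriedrichsPair (T0 T0t : H →ₗ.[ℂ] H) (lam mu : ℝ)
    extends IsDualPairT12 T0 T0t lam : Prop where
  mu_pos : 0 < mu
  coercive : ∀ (x : H) (hx : x ∈ T0.domain),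
    2 * mu * ‖x‖ ^ 2 ≤ (pInner (T0 ⟨x, hx⟩ + T0t ⟨x, dom_eq.le hx⟩) x).re

/-- The boundary form `[u|v] := ⟨T₁u , v⟩ − ⟨u , T̃₁v⟩` on the graph space
`W := dom T₁ = dom (T̃₀)*`.  The hypothesis `hW` expresses the fact `dom T₁ = dom T̃₁`. -/
def bform (T0 T0t : H →ₗ.[ℂ] H) (hW : T0t.adjoint.domain = T0.adjoint.domain)
    (u v : T0t.adjoint.domain) : ℂ :=
  pInner (T0t.adjoint u) (v : H) - pInner (u : H) (T0.adjoint ⟨(v : H), hW.le v.2⟩)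

/-- `X^[⊥]`, the `[·|·]`-orthogonal complement of `X ⊆ W` in the graph space. -/
def iorth (T0 T0t : H →ₗ.[ℂ] H) (hW : T0t.adjoint.domain = T0.adjoint.domain)
    (X : Set ↥T0t.adjoint.domain) : Set ↥T0t.adjoint.domain :=
  {u | ∀ v ∈ X, bform T0 T0t hW u v = 0}

/-- `W⁺ = {u ∈ W : [u|u] ≥ 0}`. -/
def Wplus (T0 T0t : H →ₗ.[ℂ] H) (hW : T0t.adjoint.domain = T0.adjoint.domain) :
    Set ↥T0t.adjoint.domain :=
  {u | 0 ≤ (bform T0 T0t hW u u).re}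

/-- `W⁻ = {u ∈ W : [u|u] ≤ 0}`. -/
def Wminus (T0 T0t : H →ₗ.[ℂ] H) (hW : T0t.adjoint.domain = T0.adjoint.domain) :
    Set ↥T0t.adjoint.domain :=
  {u | (bform T0 T0t hW u u).re ≤ 0}

/-- (V)-boundary conditions for a subset `V` of the graph space `W`. -/
def VBC (T0 T0t : H →ₗ.[ℂ] H) (hW : T0t.adjoint.domain = T0.adjoint.domain)
    (V : Set ↥T0t.adjoint.domain) : Prop :=
  V ⊆ Wplus T0 T0t hW ∧ iorth T0 T0t hW V ⊆ Wminus T0 T0t hW ∧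
    V = iorth T0 T0t hW (iorth T0 T0t hW V)

/-- The graph norm `‖u‖_{T₁} = ‖u‖ + ‖T₁ u‖` on the graph space. -/
def gnorm (T0t : H →ₗ.[ℂ] H) (u : T0t.adjoint.domain) : ℝ :=
  ‖(u : H)‖ + ‖T0t.adjoint u‖

/-- The distance associated with the graph norm. -/
def gdist (T0t : H →ₗ.[ℂ] H) (u v : T0t.adjoint.domain) : ℝ := gnorm T0t (u - v)

/-- Closedness (sequential) in the graph-norm topology of `W`. -/
def GClosed (T0t : H →ₗ.[ℂ] H) (X : Set ↥T0t.adjoint.domain) : Prop :=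
  ∀ f : ℕ → ↥T0t.adjoint.domain, (∀ n, f n ∈ X) →
    ∀ l, Tendsto (fun n => gdist T0t (f n) l) atTop (𝓝 0) → l ∈ X

/-- `W₀` (the domain of the closure of `T₀`), viewed as a subset of the graph space `W`. -/
def W0set (T0 T0t : H →ₗ.[ℂ] H) : Set ↥T0t.adjoint.domain :=
  {u | (u : H) ∈ T0.closure.domain}

/-- The graph inner product on `W` (in the paper's convention). -/
def gip (T0t : H →ₗ.[ℂ] H) (u v : ↥T0t.adjoint.domain) : ℂ :=
  pInner (u : H) (v : H) + pInner (T0t.adjoint u) (T0t.adjoint v)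

/-- The (Hilbert) orthogonal complement of `W₀` in the graph space. -/
def W0perp (T0 T0t : H →ₗ.[ℂ] H) : Set ↥T0t.adjoint.domain :=
  {u | ∀ v : ↥T0t.adjoint.domain, (v : H) ∈ T0.closure.domain → gip T0t u v = 0}

/-- `ker T₁` as a subset of the graph space. -/
def kerT1set (T0t : H →ₗ.[ℂ] H) : Set ↥T0t.adjoint.domain := {u | T0t.adjoint u = 0}

/-- `ker T̃₁` as a subset of the graph space. -/
def kerT1tset (T0 T0t : H →ₗ.[ℂ] H) (hW : T0t.adjoint.domain = T0.adjoint.domain) :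
    Set ↥T0t.adjoint.domain :=
  {u | T0.adjoint ⟨(u : H), hW.le u.2⟩ = 0}

/-- An operator `M ∈ L(W;W')`, encoded through the pairing `m u v = ⟨Mu, v⟩_{W',W}`
(linear in `u`, antilinear in `v`, and bounded with respect to the graph norm). -/
structure MOp (T0t : H →ₗ.[ℂ] H) where
  m : ↥T0t.adjoint.domain → ↥T0t.adjoint.domain → ℂ
  add_left : ∀ u v w, m (u + v) w = m u w + m v w
  smul_left : ∀ (c : ℂ) (u w), m (c • u) w = c * m u w
  add_right : ∀ u v w, m u (v + w) = m u v + m u w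
  smul_right : ∀ (c : ℂ) (u w), m u (c • w) = starRingEnd ℂ c * m u w
  bounded : ∃ C, ∀ u v, ‖m u v‖ ≤ C * (gnorm T0t u * gnorm T0t v)

/-- The (M)-boundary conditions for a pairing `m u v = ⟨Mu, v⟩_{W',W}`:
(M1) non-negativity and (M2) `W = ker (D − M) + ker (D + M)`. -/
def MBC (T0 T0t : H →ₗ.[ℂ] H) (hW : T0t.adjoint.domain = T0.adjoint.domain)
    (m : ↥T0t.adjoint.domain → ↥T0t.adjoint.domain → ℂ) : Prop :=
  (∀ u, 0 ≤ (m u u).re) ∧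
  (∀ w : ↥T0t.adjoint.domain, ∃ a b : ↥T0t.adjoint.domain,
    (∀ v, bform T0 T0t hW a v = m a v) ∧ (∀ v, bform T0 T0t hW b v + m b v = 0) ∧ w = a + b)

/-- `ker (D − M)` for a pairing `m`. -/
def kerDsubM (T0 T0t : H →ₗ.[ℂ] H) (hW : T0t.adjoint.domain = T0.adjoint.domain)
    (m : ↥T0t.adjoint.domain → ↥T0t.adjoint.domain → ℂ) : Set ↥T0t.adjoint.domain :=
  {u | ∀ v, bform T0 T0t hW u v = m u v}

/-- `ker (D + M)` for a pairing `m`. -/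
def kerDaddM (T0 T0t : H →ₗ.[ℂ] H) (hW : T0t.adjoint.domain = T0.adjoint.domain)
    (m : ↥T0t.adjoint.domain → ↥T0t.adjoint.domain → ℂ) : Set ↥T0t.adjoint.domain :=
  {u | ∀ v, bform T0 T0t hW u v + m u v = 0}

/-! The boundary form is hermitian, and on the graph space `T₁ + T̃₁` is the bounded coercive
extension of `T₀ + T̃₀`; hence `2 Re⟨T₁u, u⟩ ≥ 2μ‖u‖² + [u|u]`, so `μ‖u‖ ≤ ‖T₁u‖` on `W⁺` and
symmetrically `μ‖u‖ ≤ ‖T̃₁u‖` on `W⁻`. This gives both estimates and both injectivities.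
`T₁(V)` is closed, since `V` is graph-closed and `T₁` is a closed operator, and it is dense:
a vector orthogonal to it is, after testing with `D ⊆ W₀ ⊆ V`, a weak solution of `T̃₁w = 0`
lying in `V^[⊥] ⊆ W⁻`, hence zero. Finally, for `f ∈ H` the Riesz representative `w` of the
bounded functional `g ↦ ⟨f, (T₁|_V)⁻¹ g⟩` solves `T̃₁w = f` in the same weak sense and lies in
`V^[⊥]`. -/

open scoped ComplexConjugate

lemma add_le_one_add_one_div_mul {x y μ : ℝ} (hμ : 0 < μ) (h : μ * x ≤ y) :
    x + y ≤ (1 + 1 / μ) * y := by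
  have hx : x ≤ y / μ := by rwa [le_div_iff₀ hμ, mul_comm]
  calc x + y ≤ y / μ + y := by linarith
    _ = (1 + 1 / μ) * y := by ring

lemma cauchySeq_of_mul_dist_le {X Y : Type*} [PseudoMetricSpace X] [PseudoMetricSpace Y]
    {x : ℕ → X} {y : ℕ → Y} {μ : ℝ} (hμ : 0 < μ)
    (h : ∀ m n, μ * dist (x m) (x n) ≤ dist (y m) (y n)) (hy : CauchySeq y) : CauchySeq x := by
  rw [Metric.cauchySeq_iff] at hy ⊢
  intro ε hε
  obtain ⟨N, hN⟩ := hy (μ * ε) (by positivity)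
  exact ⟨N, fun m hm n hn => lt_of_mul_lt_mul_left ((h m n).trans_lt (hN m hm n hn)) hμ.le⟩

section InnerProductSpace

variable {E : Type*} [NormedAddCommGroup E] [InnerProductSpace ℂ E]

lemma mul_norm_le_of_mul_norm_sq_le_re_inner {μ : ℝ} {u a : E}
    (h : μ * ‖u‖ ^ 2 ≤ (⟪u, a⟫_ℂ).re) : μ * ‖u‖ ≤ ‖a‖ := by
  have hcs : μ * ‖u‖ * ‖u‖ ≤ ‖a‖ * ‖u‖ := by
    calc μ * ‖u‖ * ‖u‖ = μ * ‖u‖ ^ 2 := by ring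
      _ ≤ (⟪u, a⟫_ℂ).re := h
      _ ≤ ‖u‖ * ‖a‖ := (Complex.re_le_norm _).trans (norm_inner_le_norm u a)
      _ = ‖a‖ * ‖u‖ := mul_comm _ _
  rcases (norm_nonneg u).eq_or_lt with hu | hu
  · rw [← hu, mul_zero]; exact norm_nonneg a
  · exact le_of_mul_le_mul_right hcs hu

lemma injOn_of_mul_norm_le {W : Submodule ℂ E} (T : W →ₗ[ℂ] E) {X : Set W}
    (hX : ∀ u ∈ X, ∀ v ∈ X, u - v ∈ X) {μ : ℝ} (hμ : 0 < μ)
    (hest : ∀ u ∈ X, μ * ‖(u : E)‖ ≤ ‖T u‖) : Set.InjOn T X := by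
  intro u hu v hv huv
  have h := hest (u - v) (hX u hu v hv)
  rw [_root_.map_sub, huv, sub_self, norm_zero] at h
  exact sub_eq_zero.mp <| W.coe_eq_zero.mp <| norm_le_zero_iff.mp <|
    nonpos_of_mul_nonpos_right h hμ

lemma ContinuousLinearMap.isSymmetric_of_dense {S : E →L[ℂ] E} {D : Set E} (hD : Dense D)
    (h : ∀ x ∈ D, ∀ y ∈ D, ⟪S x, y⟫_ℂ = ⟪x, S y⟫_ℂ) : (S : E →ₗ[ℂ] E).IsSymmetric := by
  intro x y
  have := Continuous.ext_on (hD.prod hD) (f := fun p : E × E => ⟪S p.1, p.2⟫_ℂ)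
    (g := fun p : E × E => ⟪p.1, S p.2⟫_ℂ) (by fun_prop) (by fun_prop)
    (fun p hp => h p.1 hp.1 p.2 hp.2)
  exact congrFun this (x, y)

lemma exists_inner_eq_inner_of_bound [CompleteSpace E] {M : Type*} [AddCommGroup M]
    [Module ℂ M] (e : M ≃ₗ[ℂ] E) (ι : M →ₗ[ℂ] E) {C : ℝ} (hC : ∀ x, ‖ι x‖ ≤ C * ‖e x‖)
    (f : E) : ∃ v : E, ∀ x, ⟪v, e x⟫_ℂ = ⟪f, ι x⟫_ℂ := by
  let B : E →L[ℂ] E := (ι ∘ₗ e.symm.toLinearMap).mkContinuous C fun y => by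
    simpa using hC (e.symm y)
  refine ⟨ContinuousLinearMap.adjoint B f, fun x => ?_⟩
  rw [ContinuousLinearMap.adjoint_inner_left]
  simp [B]

end InnerProductSpace

lemma LinearPMap.IsClosed.exists_apply_eq_of_tendsto {R E F : Type*} [CommRing R]
    [AddCommGroup E] [AddCommGroup F] [Module R E] [Module R F] [TopologicalSpace E]
    [TopologicalSpace F] {T : E →ₗ.[R] F} (hT : T.IsClosed) {u : ℕ → T.domain} {x : E} {y : F}
    (hx : Tendsto (fun n => (u n : E)) atTop (𝓝 x)) (hy : Tendsto (fun n => T (u n)) atTop (𝓝 y)) :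
    ∃ h : x ∈ T.domain, T ⟨x, h⟩ = y := by
  obtain ⟨z, hzx, hzy⟩ := (T.mem_graph_iff).mp <|
    hT.mem_of_tendsto (hx.prodMk_nhds hy) (Eventually.of_forall fun n => T.mem_graph (u n))
  subst hzx
  exact ⟨z.2, hzy⟩

lemma isClosed_map_adjoint {E : Type*} [NormedAddCommGroup E] [InnerProductSpace ℂ E]
    [CompleteSpace E] {T : E →ₗ.[ℂ] E} (hT : Dense (T.domain : Set E))
    {V : Submodule ℂ T†.domain} (hV : GClosed T V) {μ : ℝ} (hμ : 0 < μ)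
    (hest : ∀ u ∈ V, μ * ‖(u : E)‖ ≤ ‖T† u‖) : IsClosed (V.map T†.toFun : Set E) := by
  refine IsSeqClosed.isClosed fun g y hg hgy => ?_
  choose u hu hTu using fun n => Submodule.mem_map.mp (hg n)
  replace hTu : ∀ n, T† (u n) = g n := hTu
  have hcauchy : CauchySeq fun n => (u n : E) := by
    refine cauchySeq_of_mul_dist_le hμ (fun m n => ?_) hgy.cauchySeq
    simpa [dist_eq_norm, ← hTu, LinearPMap.map_sub] using hest _ (V.sub_mem (hu m) (hu n))
  obtain ⟨x, hx⟩ := cauchySeq_tendsto_of_complete hcauchy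
  obtain ⟨hxT, hTx⟩ := (adjoint_isClosed hT).exists_apply_eq_of_tendsto hx
    (by simp only [hTu]; exact hgy)
  refine Submodule.mem_map.mpr ⟨⟨x, hxT⟩, hV u hu _ ?_, hTx⟩
  have hnorm : Tendsto (fun n => ‖(u n : E) - x‖ + ‖g n - y‖) atTop (𝓝 0) := by
    simpa using (tendsto_iff_norm_sub_tendsto_zero.mp hx).add
      (tendsto_iff_norm_sub_tendsto_zero.mp hgy)
  convert hnorm using 2 with n
  simp [gdist, gnorm, LinearPMap.map_sub, hTu, hTx]

section BoundaryForm

variable {E : Type*} [NormedAddCommGroup E] [InnerProductSpace ℂ E] [CompleteSpace E]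
  {T0 T0t : E →ₗ.[ℂ] E} (hW : T0t†.domain = T0†.domain)

lemma re_bform_self (u : T0t†.domain) :
    (bform T0 T0t hW u u).re =
      (⟪(u : E), T0t† u⟫_ℂ).re - (⟪(u : E), T0† ⟨u, hW.le u.2⟩⟫_ℂ).re := by
  rw [bform, pInner, pInner, Complex.sub_re, ← inner_conj_symm (T0† _), Complex.conj_re]

lemma sub_mem_iorth {X : Set T0t†.domain} {u v : T0t†.domain} (hu : u ∈ iorth T0 T0t hW X)
    (hv : v ∈ iorth T0 T0t hW X) : u - v ∈ iorth T0 T0t hW X := fun w hw => by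
  have hu := hu w hw
  have hv := hv w hw
  simp only [bform, pInner] at hu hv ⊢
  rw [LinearPMap.map_sub, Submodule.coe_sub, inner_sub_right, inner_sub_right]
  linear_combination hu - hv

end BoundaryForm

namespace IsFriedrichsPair

variable {E : Type*} [NormedAddCommGroup E] [InnerProductSpace ℂ E] {T0 T0t : E →ₗ.[ℂ] E}
  {lam mu : ℝ} (hF : IsFriedrichsPair T0 T0t lam mu)
include hF

lemma isFormalAdjoint : T0.IsFormalAdjoint T0t :=
  fun φ ψ => by simpa [pInner] using congrArg conj (hF.sym φ ψ)

lemma dense_domain_tilde : Dense (T0t.domain : Set E) :=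
  hF.dom_eq ▸ hF.dense'

variable [CompleteSpace E]

lemma le_adjoint_tilde : T0 ≤ T0t† :=
  hF.isFormalAdjoint.symm.le_adjoint hF.dense_domain_tilde

lemma exists_sum_extension :
    ∃ S : E →L[ℂ] E,
      (∀ φ : T0.domain, S φ = T0 φ + T0t ⟨φ, hF.dom_eq.le φ.2⟩) ∧
      (S : E →ₗ[ℂ] E).IsSymmetric ∧ ∀ x, 2 * mu * ‖x‖ ^ 2 ≤ (⟪x, S x⟫_ℂ).re := by
  let S₀ : T0.domain →ₗ[ℂ] E := T0.toFun + T0t.toFun ∘ₗ Submodule.inclusion hF.dom_eq.le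
  let S : E →L[ℂ] E := (S₀.mkContinuous (2 * lam) fun φ => hF.bound φ φ.2).extend
    T0.domain.subtypeL
  have hS : ∀ φ : T0.domain, S φ = T0 φ + T0t ⟨φ, hF.dom_eq.le φ.2⟩ :=
    ContinuousLinearMap.extend_eq _ hF.dense'.denseRange_val
      isUniformEmbedding_subtype_val.isUniformInducing
  refine ⟨S, hS, ?_, fun x => ?_⟩
  · refine ContinuousLinearMap.isSymmetric_of_dense hF.dense' fun x hx y hy => ?_
    rw [hS ⟨x, hx⟩, hS ⟨y, hy⟩, inner_add_left, inner_add_right, add_comm]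
    exact congrArg₂ (· + ·) (hF.isFormalAdjoint.symm _ ⟨y, hy⟩)
      (hF.isFormalAdjoint ⟨x, hx⟩ ⟨y, hF.dom_eq.le hy⟩)
  · have hclosed : IsClosed {x : E | 2 * mu * ‖x‖ ^ 2 ≤ (⟪x, S x⟫_ℂ).re} :=
      isClosed_le (by fun_prop) (by fun_prop)
    refine hclosed.closure_subset_iff.mpr (fun φ hφ => ?_) (hF.dense' x)
    show _ ≤ (⟪φ, S φ⟫_ℂ).re
    rw [hS ⟨φ, hφ⟩]
    exact hF.coercive φ hφ

variable (hW : T0t†.domain = T0†.domain)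
include hW

lemma exists_adjoint_add_adjoint_eq :
    ∃ S : E →L[ℂ] E, (S : E →ₗ[ℂ] E).IsSymmetric ∧
      (∀ x, 2 * mu * ‖x‖ ^ 2 ≤ (⟪x, S x⟫_ℂ).re) ∧
      ∀ u : T0t†.domain, T0t† u + T0† ⟨u, hW.le u.2⟩ = S u := by
  obtain ⟨S, hS, hSsymm, hScoer⟩ := hF.exists_sum_extension
  refine ⟨S, hSsymm, hScoer, fun u => hF.dense'.eq_of_inner_left ℂ fun φ hφ => ?_⟩
  refine Eq.trans ?_ (hSsymm u φ).symm
  rw [ContinuousLinearMap.coe_coe, hS ⟨φ, hφ⟩, inner_add_left, inner_add_right, add_comm]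
  exact congrArg₂ (· + ·) (adjoint_isFormalAdjoint hF.dense' ⟨u, hW.le u.2⟩ ⟨φ, hφ⟩)
    (adjoint_isFormalAdjoint hF.dense_domain_tilde u ⟨φ, hF.dom_eq.le hφ⟩)

lemma inner_adjoint_add_adjoint_comm (u v : T0t†.domain) :
    ⟪T0t† u + T0† ⟨u, hW.le u.2⟩, v⟫_ℂ = ⟪(u : E), T0t† v + T0† ⟨v, hW.le v.2⟩⟫_ℂ := by
  obtain ⟨S, hSsymm, -, hS⟩ := hF.exists_adjoint_add_adjoint_eq hW
  rw [hS, hS]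
  exact hSsymm _ _

lemma two_mul_norm_sq_le_re_inner_adjoint_add_adjoint (u : T0t†.domain) :
    2 * mu * ‖(u : E)‖ ^ 2 ≤ (⟪(u : E), T0t† u + T0† ⟨u, hW.le u.2⟩⟫_ℂ).re := by
  obtain ⟨S, -, hScoer, hS⟩ := hF.exists_adjoint_add_adjoint_eq hW
  rw [hS]
  exact hScoer u

lemma bform_eq_conj (u v : T0t†.domain) : bform T0 T0t hW u v = conj (bform T0 T0t hW v u) := by
  have h := hF.inner_adjoint_add_adjoint_comm hW v u
  rw [inner_add_left, inner_add_right] at h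
  simp only [bform, pInner, _root_.map_sub, inner_conj_symm]
  linear_combination -h

lemma mul_norm_le_of_mem_Wplus {u : T0t†.domain} (hu : u ∈ Wplus T0 T0t hW) :
    mu * ‖(u : E)‖ ≤ ‖T0t† u‖ := by
  refine mul_norm_le_of_mul_norm_sq_le_re_inner ?_
  have h := hF.two_mul_norm_sq_le_re_inner_adjoint_add_adjoint hW u
  rw [inner_add_right, Complex.add_re] at h
  have := re_bform_self hW u
  have : 0 ≤ (bform T0 T0t hW u u).re := hu
  linarith

lemma mul_norm_le_of_mem_Wminus {u : T0t†.domain} (hu : u ∈ Wminus T0 T0t hW) :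
    mu * ‖(u : E)‖ ≤ ‖T0† ⟨u, hW.le u.2⟩‖ := by
  refine mul_norm_le_of_mul_norm_sq_le_re_inner ?_
  have h := hF.two_mul_norm_sq_le_re_inner_adjoint_add_adjoint hW u
  rw [inner_add_right, Complex.add_re] at h
  have := re_bform_self hW u
  have : (bform T0 T0t hW u u).re ≤ 0 := hu
  linarith

lemma exists_mem_iorth_of_inner_eq {V : Set T0t†.domain} (hW0V : W0set T0 T0t ⊆ V) {v f : E}
    (h : ∀ u ∈ V, ⟪v, T0t† u⟫_ℂ = ⟪f, (u : E)⟫_ℂ) :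
    ∃ w ∈ iorth T0 T0t hW V, (w : E) = v ∧ T0† ⟨w, hW.le w.2⟩ = f := by
  have hD : ∀ φ : T0.domain, ⟪f, (φ : E)⟫_ℂ = ⟪v, T0 φ⟫_ℂ := fun φ => by
    have hφV : (⟨φ, hF.le_adjoint_tilde.1 φ.2⟩ : T0t†.domain) ∈ V :=
      hW0V (T0.le_closure.1 φ.2)
    rw [← h _ hφV, hF.le_adjoint_tilde.2 (y := ⟨φ, hF.le_adjoint_tilde.1 φ.2⟩) rfl]
  have hv : v ∈ T0†.domain := mem_adjoint_domain_of_exists v ⟨f, hD⟩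
  have hTv := adjoint_apply_eq hF.dense' ⟨v, hv⟩ hD
  refine ⟨⟨v, hW ▸ hv⟩, fun u hu => ?_, rfl, hTv⟩
  rw [hF.bform_eq_conj hW, bform, pInner, pInner, hTv, h u hu, sub_self, _root_.map_zero]

lemma exists_mem_adjoint_tilde_eq {V : Submodule ℂ T0t†.domain} (hclosed : GClosed T0t V)
    (hW0V : W0set T0 T0t ⊆ V) (hpos : (V : Set T0t†.domain) ⊆ Wplus T0 T0t hW)
    (hneg : iorth T0 T0t hW V ⊆ Wminus T0 T0t hW) (f : E) : ∃ u ∈ V, T0t† u = f := by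
  set R := V.map T0t†.toFun
  have hRclosed : IsClosed (R : Set E) := isClosed_map_adjoint hF.dense_domain_tilde hclosed
    hF.mu_pos fun u hu => hF.mul_norm_le_of_mem_Wplus hW (hpos hu)
  have : CompleteSpace R := hRclosed.completeSpace_coe
  have hRperp : Rᗮ = ⊥ := by
    refine (Submodule.eq_bot_iff _).mpr fun w hw => ?_
    obtain ⟨w', hw', rfl, hTw'⟩ := hF.exists_mem_iorth_of_inner_eq hW hW0V (v := w) (f := 0)
      fun u hu => by
        rw [inner_zero_left]
        exact (Submodule.mem_orthogonal' R w).mp hw _ (Submodule.mem_map_of_mem hu)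
    have h := hF.mul_norm_le_of_mem_Wminus hW (hneg hw')
    rw [hTw', norm_zero] at h
    exact norm_le_zero_iff.mp (nonpos_of_mul_nonpos_right h hF.mu_pos)
  have hfR : f ∈ R := (Submodule.orthogonal_eq_bot_iff.mp hRperp).symm ▸ Submodule.mem_top
  exact Submodule.mem_map.mp hfR

lemma exists_mem_iorth_adjoint_eq {V : Submodule ℂ T0t†.domain}
    (hW0V : W0set T0 T0t ⊆ V) (hest : ∀ u ∈ V, mu * ‖(u : E)‖ ≤ ‖T0t† u‖)
    (hsurj : ∀ f, ∃ u ∈ V, T0t† u = f) (f : E) :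
    ∃ w ∈ iorth T0 T0t hW V, T0† ⟨w, hW.le w.2⟩ = f := by
  let A : V →ₗ[ℂ] E := T0t†.toFun ∘ₗ V.subtype
  have hA : Function.Bijective A :=
    ⟨fun u v h => Subtype.ext <| injOn_of_mul_norm_le T0t†.toFun
        (fun _ hu _ hv => V.sub_mem hu hv) hF.mu_pos hest u.2 v.2 h,
      fun g => let ⟨u, hu, hg⟩ := hsurj g; ⟨⟨u, hu⟩, hg⟩⟩
  obtain ⟨v, hv⟩ := exists_inner_eq_inner_of_bound (LinearEquiv.ofBijective A hA)
    (T0t†.domain.subtype ∘ₗ V.subtype) (C := 1 / mu) (fun u => by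
      rw [one_div, inv_mul_eq_div, le_div_iff₀' hF.mu_pos]
      exact hest u u.2) f
  obtain ⟨w, hw, -, hTw⟩ := hF.exists_mem_iorth_of_inner_eq hW hW0V fun u hu => hv ⟨u, hu⟩
  exact ⟨w, hw, hTw⟩

end IsFriedrichsPair

/-- Theorem 2.3 (xii): if `V` is graph-norm closed, `W₀ ⊆ V ⊆ W⁺` and
`V^[⊥] ⊆ W⁻`, then `T₁|_V : V → H` and `T̃₁|_{V^[⊥]} : V^[⊥] → H` are bijective,
and the a priori estimate `‖u‖ + ‖T₁u‖ ≤ (1 + 1/μ)‖T₁u‖` holds on `V`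
(and likewise for `T̃₁` on `V^[⊥]`). -/
theorem bijective_realisation_with_signed_boundary_map
    (T0 T0t : H →ₗ.[ℂ] H) (lam mu : ℝ) (hF : IsFriedrichsPair T0 T0t lam mu)
    (hW : T0t.adjoint.domain = T0.adjoint.domain)
    (V : Submodule ℂ ↥T0t.adjoint.domain)
    (hclosed : GClosed T0t (V : Set _))
    (hW0V : W0set T0 T0t ⊆ (V : Set _))
    (hpos : (V : Set _) ⊆ Wplus T0 T0t hW)
    (hneg : iorth T0 T0t hW (V : Set _) ⊆ Wminus T0 T0t hW) :
    (∀ u ∈ V, ∀ v ∈ V, T0t.adjoint u = T0t.adjoint v → u = v) ∧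
    (∀ f : H, ∃ u ∈ V, T0t.adjoint u = f) ∧
    (∀ u ∈ iorth T0 T0t hW (V : Set _), ∀ v ∈ iorth T0 T0t hW (V : Set _),
      T0.adjoint ⟨(u : H), hW.le u.2⟩ = T0.adjoint ⟨(v : H), hW.le v.2⟩ → u = v) ∧
    (∀ f : H, ∃ u ∈ iorth T0 T0t hW (V : Set _),
      T0.adjoint ⟨(u : H), hW.le u.2⟩ = f) ∧
    (∀ u ∈ V, ‖(u : H)‖ + ‖T0t.adjoint u‖ ≤ (1 + 1 / mu) * ‖T0t.adjoint u‖) ∧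
    (∀ u ∈ iorth T0 T0t hW (V : Set _),
      ‖(u : H)‖ + ‖T0.adjoint ⟨(u : H), hW.le u.2⟩‖ ≤
        (1 + 1 / mu) * ‖T0.adjoint ⟨(u : H), hW.le u.2⟩‖) := by
  have estV : ∀ u ∈ V, mu * ‖(u : H)‖ ≤ ‖T0t† u‖ :=
    fun u hu => hF.mul_norm_le_of_mem_Wplus hW (hpos hu)
  have estVperp : ∀ u ∈ iorth T0 T0t hW V, mu * ‖(u : H)‖ ≤ ‖T0† ⟨u, hW.le u.2⟩‖ :=
    fun u hu => hF.mul_norm_le_of_mem_Wminus hW (hneg hu)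
  have surjV := hF.exists_mem_adjoint_tilde_eq hW hclosed hW0V hpos hneg
  exact ⟨fun u hu v hv => injOn_of_mul_norm_le T0t†.toFun (fun _ hu _ hv => V.sub_mem hu hv)
      hF.mu_pos estV hu hv,
    surjV,
    fun u hu v hv => injOn_of_mul_norm_le (T0†.toFun ∘ₗ Submodule.inclusion hW.le)
      (fun _ hu _ hv => sub_mem_iorth hW hu hv) hF.mu_pos estVperp hu hv,
    hF.exists_mem_iorth_adjoint_eq hW hW0V estV surjV,
    fun u hu => add_le_one_add_one_div_mul hF.mu_pos (estV u hu),
    fun u hu => add_le_one_add_one_div_mul hF.mu_pos (estVperp u hu)⟩
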